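/- arXiv:2411.02750 — 8 statements merged into one kernel-verified Lean document; each statement's English description precedes it below -/
import Mathlib

section
/- Define f : ℕ → ℝ by f(1) = e and f(a+1) = f(a) + 1 + 1/(2·f(a)) + 0.6/(2·f(a)^2) for a ≥ 1. Then for every natural number a ≥ 2, f(a) ≤ a + 0.5·ln a + 1.65. -/
/-!
A first induction gives `f a ≥ a + 3/2`, so the increments `1/(2 f a) + 0.3/(f a)^2` are at most
`1/(2a+3) + 0.3/(a+3/2)^2`. This is dominated by `(log (a+1) - log a)/2`, because the first term of
the series `log (1 + 1/a) = ∑ 2/((2k+1)(2a+1)^(2k+1))` already gives `log (1 + 1/a) ≥ 2/(2a+1)`.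
A second induction from `a = 2`, where the bound is checked numerically, then closes the argument.
-/

open Real

lemma two_div_two_mul_add_one_le_log_add_one_sub_log {x : ℝ} (hx : 0 < x) :
    2 / (2 * x + 1) ≤ log (x + 1) - log x := by
  have hfirst := le_hasSum (hasSum_log_one_add_inv hx) 0 fun k _ ↦ by positivity
  rw [← log_div (by positivity) hx.ne', add_div, div_self hx.ne', one_div]
  simpa [div_eq_mul_inv] using hfirst

lemma rec_increment_le_half_log_sub_log {x : ℝ} (hx : 0 < x) :
    1 / (2 * (x + 1.5)) + 0.6 / (2 * (x + 1.5) ^ 2) ≤ 0.5 * (log (x + 1) - log x) := by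
  have hlog := two_div_two_mul_add_one_le_log_add_one_sub_log hx
  have hrat : 1 / (2 * (x + 1.5)) + 0.6 / (2 * (x + 1.5) ^ 2) ≤ 0.5 * (2 / (2 * x + 1)) := by
    field_simp
    nlinarith
  linarith

lemma add_three_halves_le_of_rec (f : ℕ → ℝ) (h1 : 2.5 ≤ f 1)
    (hrec : ∀ a : ℕ, 1 ≤ a → f (a + 1) = f a + 1 + 1 / (2 * f a) + 0.6 / (2 * (f a) ^ 2)) :
    ∀ a : ℕ, 1 ≤ a → (a : ℝ) + 1.5 ≤ f a := by
  intro a ha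
  induction a, ha using Nat.le_induction with
  | base => norm_num at h1 ⊢; linarith
  | succ n hn ih =>
    have hfn : 0 ≤ f n := by linarith [(n.cast_nonneg : (0 : ℝ) ≤ n)]
    rw [hrec n hn]
    push_cast
    have : 0 ≤ 1 / (2 * f n) + 0.6 / (2 * f n ^ 2) := by positivity
    linarith

lemma rec_step_exp_one_le :
    exp 1 + 1 + 1 / (2 * exp 1) + 0.6 / (2 * exp 1 ^ 2) ≤ 2 + 0.5 * log 2 + 1.65 := by
  have he_lo : 2.5 ≤ exp 1 := by linarith [exp_one_gt_d9]
  have he_hi := exp_one_lt_d9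
  have hlog2 := log_two_gt_d9
  have hinv : 1 / (2 * exp 1) ≤ 1 / (2 * 2.5) := by gcongr
  have hinv_sq : 0.6 / (2 * exp 1 ^ 2) ≤ 0.6 / (2 * 2.5 ^ 2) := by gcongr
  norm_num at *
  linarith

theorem stmt_0 (f : ℕ → ℝ) (h1 : f 1 = Real.exp 1)
    (hrec : ∀ a : ℕ, 1 ≤ a →
      f (a + 1) = f a + 1 + 1 / (2 * f a) + 0.6 / (2 * (f a) ^ 2)) :
    ∀ a : ℕ, 2 ≤ a → f a ≤ (a : ℝ) + 0.5 * Real.log a + 1.65 := by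
  have hlow := add_three_halves_le_of_rec f (by linarith [h1, exp_one_gt_d9]) hrec
  intro a ha
  induction a, ha using Nat.le_induction with
  | base =>
    rw [hrec 1 le_rfl, h1]
    exact_mod_cast rec_step_exp_one_le
  | succ n hn ih =>
    have hfn : (n : ℝ) + 1.5 ≤ f n := hlow n (by omega)
    have hinc := rec_increment_le_half_log_sub_log (x := n) (by positivity)
    have hdecr : 1 / (2 * f n) + 0.6 / (2 * f n ^ 2)
        ≤ 1 / (2 * (n + 1.5)) + 0.6 / (2 * ((n : ℝ) + 1.5) ^ 2) := by
      gcongr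
    rw [hrec n (by omega)]
    push_cast
    linarith
end

section
/- Let n ≥ 2 and Δ ≥ 0 be natural numbers with n ≥ 2Δ, and let a_1, …, a_n be natural numbers with n − Δ ≤ a_i ≤ n for each i. Let ρ = Σ_{i=1}^n (n − a_i). Then ∏_{i=1}^n (a_i!)^(1/a_i) ≤ 2πn · exp(1/(3n)) · (n/e)^n · (1 − ρ/n²)^n. -/
/-!
Robbins' bound `log sₖ - log sₖ₊₁ ≤ 1/(12k(k+1))` on the Stirling sequence
`sₖ = k!/(√(2k)(k/e)^k)` makes `log sₖ - 1/(12k)` increase to `log √π`, which gives `a! ≤ √(2πa) (a/e)^a e^{1/(12a)}` and hence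
`(a!)^{1/a} ≤ (2πa)^{1/(2a)} e^{1/(12a²)} · a/e`. For `n/2 ≤ a ≤ n` the first two factors are at
most `(2πn)^{1/n}` and `e^{1/(3n²)}`, whose `n`-th powers are `2πn` and `e^{1/(3n)}`. What remains
is `∏ aᵢ / eⁿ`, and AM–GM bounds `∏ aᵢ` by `((∑ aᵢ)/n)ⁿ = nⁿ (1 - ρ/n²)ⁿ`.
-/

open Finset Filter Topology Real Stirling Nat

namespace Stirling

theorem log_stirlingSeq_sub_one_div_monotone :
    Monotone fun k : ℕ ↦ log (stirlingSeq (k + 1)) - 1 / (12 * (k + 1 : ℝ)) := by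
  refine monotone_nat_of_le_succ fun k ↦ ?_
  have robbins := log_stirlingSeq_sdiff_le (k + 1)
  have telescope : 1 / (12 * (k + 1 : ℝ) * (k + 1 + 1)) =
      1 / (12 * (k + 1 : ℝ)) - 1 / (12 * (k + 1 + 1 : ℝ)) := by
    field_simp; ring
  push_cast at robbins ⊢
  linarith

theorem stirlingSeq_le_sqrt_pi_mul_exp {n : ℕ} (hn : n ≠ 0) :
    stirlingSeq n ≤ √π * exp (1 / (12 * n)) := by
  obtain ⟨k, rfl⟩ : ∃ k, n = k + 1 := ⟨n - 1, by omega⟩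
  have hlim : Tendsto (fun k : ℕ ↦ log (stirlingSeq (k + 1)) - 1 / (12 * (k + 1 : ℝ))) atTop
      (𝓝 (log √π - 0)) := by
    refine ((continuousAt_log (by positivity)).tendsto.comp
      (tendsto_stirlingSeq_sqrt_pi.comp (tendsto_add_atTop_nat 1))).sub ?_
    exact tendsto_const_nhds.div_atTop <| Tendsto.const_mul_atTop (by norm_num) <|
      tendsto_natCast_atTop_atTop.atTop_add tendsto_const_nhds
  have hle := log_stirlingSeq_sub_one_div_monotone.ge_of_tendsto hlim k
  rw [sub_zero, sub_le_iff_le_add, ← exp_le_exp, exp_add, exp_log (stirlingSeq'_pos k),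
    exp_log (by positivity)] at hle
  exact_mod_cast hle

theorem factorial_le_stirling_mul_exp {n : ℕ} (hn : n ≠ 0) :
    (n ! : ℝ) ≤ √(2 * π * n) * (n / exp 1) ^ n * exp (1 / (12 * n)) := by
  have : √(2 * π * n) * (n / exp 1) ^ n * exp (1 / (12 * n)) =
      √π * exp (1 / (12 * n)) * (√(2 * n) * (n / exp 1) ^ n) := by
    rw [show 2 * π * n = π * (2 * n) by ring, sqrt_mul pi_pos.le]
    ring
  rw [this, ← div_le_iff₀ (by positivity)]
  exact stirlingSeq_le_sqrt_pi_mul_exp hn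

end Stirling

theorem factorial_rpow_inv_le {n : ℕ} (hn : n ≠ 0) :
    (n ! : ℝ) ^ (n : ℝ)⁻¹ ≤
      (2 * π * n) ^ (2 * n : ℝ)⁻¹ * exp (1 / (12 * n ^ 2)) * (n / exp 1) := by
  grw [factorial_le_stirling_mul_exp hn]
  rw [mul_rpow (by positivity) (by positivity), mul_rpow (by positivity) (by positivity),
    pow_rpow_inv_natCast (by positivity) hn, sqrt_eq_rpow, ← rpow_mul (by positivity),
    ← exp_mul]
  exact le_of_eq (by ring_nf)

theorem factorial_rpow_inv_le_of_le_of_le_two_mul {a n : ℕ} (ha : a ≠ 0) (han : a ≤ n)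
    (hna : n ≤ 2 * a) :
    (a ! : ℝ) ^ (a : ℝ)⁻¹ ≤
      (2 * π * n) ^ (n : ℝ)⁻¹ * exp (1 / (3 * n ^ 2)) * (a / exp 1) := by
  have ha' : (1 : ℝ) ≤ a := by exact_mod_cast Nat.one_le_iff_ne_zero.mpr ha
  have han' : (a : ℝ) ≤ n := by exact_mod_cast han
  have hna' : (n : ℝ) ≤ 2 * a := by exact_mod_cast hna
  grw [factorial_rpow_inv_le ha]
  gcongr ?_ * exp ?_ * _
  · calc (2 * π * a) ^ (2 * a : ℝ)⁻¹ ≤ (2 * π * n) ^ (2 * a : ℝ)⁻¹ := by gcongr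
      _ ≤ (2 * π * n) ^ (n : ℝ)⁻¹ := by
        gcongr
        · nlinarith [pi_gt_three]
        · linarith
  · exact one_div_le_one_div_of_le (by nlinarith) (by nlinarith)

theorem Real.prod_le_sum_div_card_pow {ι : Type*} (s : Finset ι) {z : ι → ℝ}
    (hz : ∀ i ∈ s, 0 ≤ z i) : ∏ i ∈ s, z i ≤ ((∑ i ∈ s, z i) / #s) ^ #s := by
  rcases s.eq_empty_or_nonempty with rfl | hs
  · simp
  have amgm := geom_mean_le_arith_mean s (fun _ ↦ 1) z (fun _ _ ↦ zero_le_one)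
    (by simpa using hs.card_pos) hz
  simp only [rpow_one, sum_const, nsmul_eq_mul, mul_one, one_mul] at amgm
  calc ∏ i ∈ s, z i = ((∏ i ∈ s, z i) ^ (#s : ℝ)⁻¹) ^ #s :=
        (rpow_inv_natCast_pow (prod_nonneg hz) hs.card_pos.ne').symm
    _ ≤ _ := by gcongr; exact rpow_nonneg (prod_nonneg hz) _

theorem stmt_5 (n Δ : ℕ) (hn : 2 ≤ n) (hΔn : 2 * Δ ≤ n)
    (a : Fin n → ℕ) (ha1 : ∀ i, n - Δ ≤ a i) (ha2 : ∀ i, a i ≤ n)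
    (ρ : ℕ) (hρ : ρ = ∑ i, (n - a i)) :
    ∏ i, ((a i).factorial : ℝ) ^ ((1 : ℝ) / (a i : ℝ)) ≤
      2 * Real.pi * n * Real.exp (1 / (3 * (n : ℝ))) * ((n : ℝ) / Real.exp 1) ^ n *
        (1 - (ρ : ℝ) / (n : ℝ) ^ 2) ^ n := by
  have hn0 : n ≠ 0 := by omega
  set C := (2 * π * n) ^ (n : ℝ)⁻¹ * exp (1 / (3 * (n : ℝ) ^ 2))
  have hC : C ^ n = 2 * π * n * exp (1 / (3 * n)) := by
    rw [mul_pow, rpow_inv_natCast_pow (by positivity) hn0, ← exp_nat_mul]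
    field_simp
  have hmean : (∑ i, (a i : ℝ)) / n = n * (1 - ρ / n ^ 2) := by
    have : (ρ : ℝ) = ∑ i, ((n : ℝ) - a i) := by
      rw [hρ, Nat.cast_sum]
      exact sum_congr rfl fun i _ ↦ Nat.cast_sub (ha2 i)
    rw [this, sum_sub_distrib, sum_const, Finset.card_fin, nsmul_eq_mul]
    field_simp
    ring
  calc ∏ i, ((a i)! : ℝ) ^ ((1 : ℝ) / (a i : ℝ))
      ≤ ∏ i, (C * (a i / exp 1)) := by
        refine prod_le_prod (fun i _ ↦ by positivity) fun i _ ↦ ?_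
        rw [one_div]
        exact factorial_rpow_inv_le_of_le_of_le_two_mul (by have := ha1 i; omega) (ha2 i)
          (by have := ha1 i; omega)
    _ = C ^ n * (∏ i, (a i : ℝ)) / exp 1 ^ n := by
        rw [prod_mul_distrib, prod_div_distrib, prod_const, prod_const, Finset.card_fin]
        ring
    _ ≤ C ^ n * ((∑ i, (a i : ℝ)) / n) ^ n / exp 1 ^ n := by
        gcongr
        simpa using prod_le_sum_div_card_pow univ fun i _ ↦ (a i).cast_nonneg
    _ = _ := by rw [hmean, hC, mul_pow, div_pow]; ring
end

section
/- (Bregman's theorem) Let n be a positive integer and R_1, …, R_n ⊆ {1, …, n}. Then the number of permutations σ of {1, …, n} with σ(i) ∈ R_i for every i is at most ∏_{i=1}^n (r_i!)^(1/r_i), where r_i = |R_i|. -/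
/-!
Schrijver's proof. Let `T` be the set of admissible bijections and `c i k` the number of `σ ∈ T`
with `σ i = k`. Jensen's inequality for `x log x` gives `(#T / r i) ^ #T ≤ ∏ₖ c i k ^ c i k =
∏_{σ ∈ T} c i (σ i)`, hence `#T ^ (n #T) ≤ ∏_{σ ∈ T} ∏ᵢ r i * c i (σ i)`. Now `c i k` counts the
admissible bijections of the minor without row `i` and column `k`, so by induction it is at most
`∏_{j ≠ i} φ #(R j \ {k})` with `φ r = (r!) ^ (1 / r)`. For fixed `σ` and `j`, the column `σ i`
lies in `R j` for exactly `r j - 1` of the rows `i ≠ j`, and `r * φ (r - 1) ^ (r - 1) = φ r ^ r`;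
so the bound for `σ` collapses to `(∏ⱼ φ (r j)) ^ n`, independently of `σ`.
-/

open Finset Real

theorem one_le_natCast_pow_self (t : ℕ) : (1 : ℝ) ≤ (t : ℝ) ^ t := by
  rcases t.eq_zero_or_pos with rfl | ht
  · simp
  · exact one_le_pow₀ (by exact_mod_cast ht)

theorem div_card_pow_le_prod_pow_self {ι : Type*} (s : Finset ι) (t : ι → ℕ) {A : ℕ}
    (hA : ∑ k ∈ s, t k = A) : ((A : ℝ) / #s) ^ A ≤ ∏ k ∈ s, (t k : ℝ) ^ t k := by
  have hRHS : 1 ≤ ∏ k ∈ s, (t k : ℝ) ^ t k := one_le_prod fun k _ ↦ one_le_natCast_pow_self _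
  rcases A.eq_zero_or_pos with rfl | hApos
  · simpa using hRHS
  have hs : (0 : ℝ) < #s := Nat.cast_pos.mpr (nonempty_of_sum_ne_zero (hA ▸ hApos.ne')).card_pos
  have jensen : A / #s * log (A / #s) ≤ (∑ k ∈ s, t k * log (t k)) / #s := by
    have := convexOn_mul_log.map_sum_le (t := s) (w := fun _ ↦ (1 : ℝ) / #s)
      (p := fun k ↦ (t k : ℝ)) (fun _ _ ↦ by positivity) (by simp [hs.ne'])
      (fun _ _ ↦ Set.mem_Ici.mpr (Nat.cast_nonneg _))
    simpa [← mul_sum, ← Nat.cast_sum, hA, div_eq_inv_mul, mul_assoc] using this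
  rw [← log_le_log_iff (by positivity) (by positivity), log_pow,
    log_prod fun k _ ↦ (one_pos.trans_le (one_le_natCast_pow_self _)).ne']
  simp only [log_pow]
  calc A * log (A / #s) = A / #s * log (A / #s) * #s := by field_simp
    _ ≤ _ := (le_div_iff₀ hs).mp jensen

noncomputable def bregmanFactor (r : ℕ) : ℝ := (r.factorial : ℝ) ^ ((1 : ℝ) / r)

theorem bregmanFactor_pos (r : ℕ) : 0 < bregmanFactor r := by
  unfold bregmanFactor; positivity

theorem bregmanFactor_pow_self (r : ℕ) : bregmanFactor r ^ r = r.factorial := by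
  rcases eq_or_ne r 0 with rfl | hr
  · simp
  · rw [bregmanFactor, one_div, rpow_inv_natCast_pow (by positivity) hr]

theorem natCast_mul_prod_erase_bregmanFactor {β : Type*} [Fintype β] [DecidableEq β]
    {S : Finset β} {k₀ : β} (hk₀ : k₀ ∈ S) :
    (#S : ℝ) * ∏ k ∈ univ.erase k₀, bregmanFactor #(S.erase k) =
      bregmanFactor #S ^ Fintype.card β := by
  have hS : #S ≠ 0 := card_ne_zero_of_mem hk₀
  have hin : {k ∈ univ.erase k₀ | k ∈ S} = S.erase k₀ := by
    ext; simp [and_comm]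
  have hout : {k ∈ univ.erase k₀ | k ∉ S} = Sᶜ := by
    ext k; simp only [mem_filter, mem_erase, mem_univ, mem_compl]
    exact ⟨And.right, fun h ↦ ⟨⟨fun h' ↦ h (h' ▸ hk₀), trivial⟩, h⟩⟩
  simp_rw [card_erase_eq_ite, apply_ite bregmanFactor]
  rw [prod_ite, prod_const, prod_const, hin, hout, card_erase_of_mem hk₀, card_compl,
    bregmanFactor_pow_self, ← mul_assoc, ← Nat.cast_mul, Nat.mul_factorial_pred hS,
    ← bregmanFactor_pow_self, ← pow_add, Nat.add_sub_cancel' (card_le_univ S)]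

theorem card_pow_card_le_card_image_pow_mul_prod {γ β : Type*} [DecidableEq β] (T : Finset γ)
    (f : γ → β) :
    (#T : ℝ) ^ #T ≤ (#(T.image f) : ℝ) ^ #T * ∏ x ∈ T, (#{y ∈ T | f y = f x} : ℝ) := by
  rcases T.eq_empty_or_nonempty with rfl | hT
  · simp
  have himage : (0 : ℝ) < #(T.image f) := Nat.cast_pos.mpr (hT.image f).card_pos
  rw [prod_comp (fun b ↦ (#{y ∈ T | f y = b} : ℝ)) f]
  calc (#T : ℝ) ^ #T = (#(T.image f) : ℝ) ^ #T * (#T / #(T.image f)) ^ #T := by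
        rw [← mul_pow, mul_div_cancel₀ _ himage.ne']
    _ ≤ _ := mul_le_mul_of_nonneg_left
        (div_card_pow_le_prod_pow_self _ _ (card_eq_sum_card_image f T).symm) (by positivity)

section Equivs

variable {α β : Type*} [DecidableEq β]

def minor (R : α → Finset β) (i : α) (k : β) (j : {x // x ≠ i}) : Finset {y // y ≠ k} :=
  (R j).subtype (· ≠ k)

theorem card_minor (R : α → Finset β) (i : α) (k : β) (j : {x // x ≠ i}) :
    #(minor R i k j) = #((R j).erase k) := by
  rw [minor, card_subtype, filter_ne']

variable [DecidableEq α]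

def subtypeApplyEqEquiv (i : α) (k : β) :
    {e : α ≃ β // e i = k} ≃ ({x // x ≠ i} ≃ {y // y ≠ k}) :=
  ((Equiv.equivCongr (Equiv.optionSubtypeNe i) (Equiv.refl β)).symm.subtypeEquiv
    fun e ↦ by simp [Equiv.equivCongr]).trans (Equiv.optionSubtype k)

@[simp]
theorem subtypeApplyEqEquiv_apply_coe {i : α} {k : β} (e : {e : α ≃ β // e i = k})
    (j : {x // x ≠ i}) : (subtypeApplyEqEquiv i k e j : β) = e.1 j := by
  simp [subtypeApplyEqEquiv, Equiv.equivCongr, Equiv.optionSubtype]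

variable [Fintype α] [Fintype β]

def admissibleEquivs (R : α → Finset β) : Finset (α ≃ β) := {σ | ∀ i, σ i ∈ R i}

theorem mem_admissibleEquivs {R : α → Finset β} {σ : α ≃ β} :
    σ ∈ admissibleEquivs R ↔ ∀ i, σ i ∈ R i := by
  simp [admissibleEquivs]

theorem card_filter_admissibleEquivs_apply_eq (R : α → Finset β) {i : α} {k : β}
    (hk : k ∈ R i) :
    #{σ ∈ admissibleEquivs R | σ i = k} = #(admissibleEquivs (minor R i k)) := by
  simp only [admissibleEquivs, filter_filter, ← Fintype.card_subtype]
  refine Fintype.card_congr <| ((Equiv.subtypeEquivRight fun σ ↦ and_comm).trans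
    (Equiv.subtypeSubtypeEquivSubtypeInter _ _).symm).trans
    ((subtypeApplyEqEquiv i k).subtypeEquiv fun e ↦ ?_)
  simp only [minor, mem_subtype, subtypeApplyEqEquiv_apply_coe, Subtype.forall]
  refine ⟨fun h j _ ↦ h j, fun h j ↦ ?_⟩
  by_cases hj : j = i
  · subst hj
    rw [e.2]
    exact hk
  · exact h j hj

theorem pow_card_admissibleEquivs_le (R : α → Finset β) :
    (#(admissibleEquivs R) : ℝ) ^ (Fintype.card α * #(admissibleEquivs R)) ≤
      ∏ σ ∈ admissibleEquivs R, ∏ i,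
        ((#(R i) : ℝ) * #{τ ∈ admissibleEquivs R | τ i = σ i}) := by
  set T := admissibleEquivs R
  have himage (i : α) : T.image (· i) ⊆ R i := by
    simp only [subset_iff, mem_image, forall_exists_index, and_imp, forall_apply_eq_imp_iff₂]
    exact fun σ hσ ↦ mem_admissibleEquivs.mp hσ i
  calc (#T : ℝ) ^ (Fintype.card α * #T) = ∏ _i : α, (#T : ℝ) ^ #T := by
        rw [prod_const, card_univ, mul_comm, pow_mul]
    _ ≤ ∏ i, ((#(R i) : ℝ) ^ #T * ∏ σ ∈ T, (#{τ ∈ T | τ i = σ i} : ℝ)) := by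
        refine prod_le_prod (fun _ _ ↦ by positivity) fun i _ ↦
          (card_pow_card_le_card_image_pow_mul_prod T (· i)).trans
            (mul_le_mul_of_nonneg_right ?_ (by positivity))
        exact pow_le_pow_left₀ (by positivity) (by exact_mod_cast card_le_card (himage i)) _
    _ = _ := by
        simp_rw [prod_mul_distrib, prod_const, prod_pow]
        rw [prod_comm]

theorem prod_natCast_mul_prod_erase_bregmanFactor {R : α → Finset β} {σ : α ≃ β}
    (hσ : ∀ i, σ i ∈ R i) :
    ∏ i, ((#(R i) : ℝ) * ∏ j ∈ univ.erase i, bregmanFactor #((R j).erase (σ i))) =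
      (∏ i, bregmanFactor #(R i)) ^ Fintype.card α := by
  have hswap : ∏ i, ∏ j ∈ univ.erase i, bregmanFactor #((R j).erase (σ i)) =
      ∏ j, ∏ k ∈ univ.erase (σ j), bregmanFactor #((R j).erase k) := by
    rw [prod_comm' (t' := univ) (s' := fun j ↦ univ.erase j)]
    · refine prod_congr rfl fun j _ ↦ ?_
      have : (univ.erase j).map σ.toEmbedding = univ.erase (σ j) := by
        rw [map_erase, map_univ_equiv]
        rfl
      rw [← this, prod_map]
      rfl
    · simp [ne_comm]
  rw [prod_mul_distrib, hswap, ← prod_mul_distrib, ← prod_pow, Fintype.card_congr σ]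
  exact prod_congr rfl fun j _ ↦ natCast_mul_prod_erase_bregmanFactor (hσ j)

end Equivs

theorem card_admissibleEquivs_le {α β : Type*} [Fintype α] [Fintype β] [DecidableEq α]
    [DecidableEq β] (R : α → Finset β) :
    (#(admissibleEquivs R) : ℝ) ≤ ∏ i, bregmanFactor #(R i) := by
  induction h : Fintype.card α using Nat.strong_induction_on generalizing α β with
  | _ n IH =>
  set T := admissibleEquivs R
  have hB : 0 ≤ ∏ i, bregmanFactor #(R i) := prod_nonneg fun _ _ ↦ (bregmanFactor_pos _).le
  rcases T.eq_empty_or_nonempty with hT | ⟨σ₀, hσ₀⟩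
  · rwa [hT, card_empty, Nat.cast_zero]
  rcases isEmpty_or_nonempty α with hα | hα
  · have : #T ≤ 1 := card_le_one.2 fun _ _ _ _ ↦ Equiv.ext isEmptyElim
    simpa using this
  have hadm : ∀ σ ∈ T, ∀ i, σ i ∈ R i := fun σ hσ ↦ mem_admissibleEquivs.mp hσ
  have hfiber : ∀ σ ∈ T, ∀ i, (#{τ ∈ T | τ i = σ i} : ℝ) ≤
      ∏ j ∈ univ.erase i, bregmanFactor #((R j).erase (σ i)) := by
    intro σ hσ i
    have hcard : Fintype.card {x // x ≠ i} < n :=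
      h ▸ Fintype.card_subtype_lt (p := (· ≠ i)) (not_not.mpr rfl)
    rw [card_filter_admissibleEquivs_apply_eq R (hadm σ hσ i)]
    refine (IH _ hcard (minor R i (σ i)) rfl).trans_eq ?_
    simp_rw [card_minor]
    exact (prod_subtype _ (by simp) fun j ↦ bregmanFactor #((R j).erase (σ i))).symm
  subst h
  refine le_of_pow_le_pow_left₀
    (Nat.mul_ne_zero (Fintype.card_ne_zero (α := α)) (card_ne_zero_of_mem hσ₀)) hB ?_
  calc (#T : ℝ) ^ (Fintype.card α * #T)
      ≤ ∏ σ ∈ T, ∏ i, ((#(R i) : ℝ) * #{τ ∈ T | τ i = σ i}) := pow_card_admissibleEquivs_le R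
    _ ≤ ∏ σ ∈ T, ∏ i,
          ((#(R i) : ℝ) * ∏ j ∈ univ.erase i, bregmanFactor #((R j).erase (σ i))) := by
        refine prod_le_prod (fun _ _ ↦ prod_nonneg fun _ _ ↦ by positivity) fun σ hσ ↦
          prod_le_prod (fun _ _ ↦ by positivity) fun i _ ↦ ?_
        exact mul_le_mul_of_nonneg_left (hfiber σ hσ i) (by positivity)
    _ = ∏ _σ ∈ T, (∏ i, bregmanFactor #(R i)) ^ Fintype.card α :=
        prod_congr rfl fun σ hσ ↦ prod_natCast_mul_prod_erase_bregmanFactor (hadm σ hσ)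
    _ = (∏ i, bregmanFactor #(R i)) ^ (Fintype.card α * #T) := by rw [prod_const, pow_mul]

theorem stmt_6_general (n : ℕ) (R : Fin n → Finset (Fin n)) :
    (Nat.card {σ : Equiv.Perm (Fin n) | ∀ i, σ i ∈ R i} : ℝ) ≤
      ∏ i, ((R i).card.factorial : ℝ) ^ ((1 : ℝ) / ((R i).card : ℝ)) := by
  have hcard : Nat.card {σ : Equiv.Perm (Fin n) | ∀ i, σ i ∈ R i} = #(admissibleEquivs R) := by
    rw [← Nat.card_eq_finsetCard]
    congr
    ext
    simp [mem_admissibleEquivs]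
  rw [hcard]
  exact card_admissibleEquivs_le R

theorem stmt_6 (n : ℕ) (hn : 1 ≤ n) (R : Fin n → Finset (Fin n)) :
    (Nat.card {σ : Equiv.Perm (Fin n) | ∀ i, σ i ∈ R i} : ℝ) ≤
      ∏ i, ((R i).card.factorial : ℝ) ^ ((1 : ℝ) / ((R i).card : ℝ)) :=
  stmt_6_general n R
end

section
/- Let q, b, t be positive integers and Δ a positive real with q > 3b ≥ 8, 4bΔ ≤ t, and t ≤ q/(e·b) − q·ln(q)/(e·b²·Δ). Then ∏_{i=t}^{⌊q/b⌋} (1 − 4bΔ/i) ≤ q^(−4). -/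
/-!
Bounding each factor by `1 - x ≤ exp (-x)` turns the product into `exp (-4bΔ H)`, where `H` is the
harmonic sum over `[t, ⌊q/b⌋]`, and `H ≥ log (⌊q/b⌋ + 1) - log t ≥ log (q / (b t))`. The upper
bound on `t` says exactly that `e b t ≤ q (1 - A) ≤ q exp (-A)` with `A = log q / (bΔ)`, i.e.
`log (q / (b t)) ≥ 1 + A`, and `4bΔ (1 + A) ≥ 4 log q`.
-/

open Finset Real

theorem Finset.prod_one_sub_le_exp_neg_sum {ι : Type*} (s : Finset ι) {x : ι → ℝ}
    (hx : ∀ i ∈ s, x i ≤ 1) : ∏ i ∈ s, (1 - x i) ≤ exp (-∑ i ∈ s, x i) := by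
  rw [← sum_neg_distrib, exp_sum]
  exact prod_le_prod (fun i hi ↦ sub_nonneg.2 (hx i hi)) fun i _ ↦ one_sub_le_exp_neg (x i)

theorem Real.log_add_one_sub_log_le_inv {x : ℝ} (hx : 0 < x) : log (x + 1) - log x ≤ x⁻¹ := by
  have h := log_le_sub_one_of_pos (show 0 < (x + 1) / x by positivity)
  rw [log_div (by positivity) hx.ne'] at h
  field_simp at h ⊢
  linarith

theorem Real.log_sub_log_le_sum_Icc_inv {t M : ℕ} (ht : 0 < t) (htM : t ≤ M + 1) :
    log (M + 1) - log t ≤ ∑ i ∈ Icc t M, (i : ℝ)⁻¹ := by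
  have telescope := sum_Ico_sub (fun i : ℕ ↦ log i) htM
  push_cast at telescope
  rw [← telescope, ← Ico_add_one_right_eq_Icc]
  refine sum_le_sum fun i hi ↦ log_add_one_sub_log_le_inv ?_
  exact_mod_cast ht.trans_le (mem_Ico.1 hi).1

theorem Real.log_div_mul_le_sum_Icc_inv {q b t : ℕ} (hb : 0 < b) (ht : 0 < t)
    (hbt : b * t ≤ q) : log (q / (b * t)) ≤ ∑ i ∈ Icc t (q / b), (i : ℝ)⁻¹ := by
  have hq : (0 : ℝ) < q := by exact_mod_cast (Nat.mul_pos hb ht).trans_le hbt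
  have hfloor : (q : ℝ) / b < (q / b : ℕ) + 1 := by
    simpa only [Nat.floor_div_eq_div] using Nat.lt_floor_add_one ((q : ℝ) / b)
  have htM : t ≤ q / b := (Nat.le_div_iff_mul_le hb).2 (by rwa [mul_comm])
  calc log (q / (b * t)) = log (q / b) - log t := by
        rw [div_mul_eq_div_div, log_div (by positivity) (by positivity)]
    _ ≤ log ((q / b : ℕ) + 1) - log t := by gcongr
    _ ≤ _ := log_sub_log_le_sum_Icc_inv ht (htM.trans (Nat.le_succ _))

theorem Real.one_add_log_div_le_log_div {q b t Δ : ℝ} (hq : 0 < q) (hb : 0 < b) (ht : 0 < t)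
    (hΔ : Δ ≠ 0)
    (htu : t ≤ q / (exp 1 * b) - q * log q / (exp 1 * b ^ 2 * Δ)) :
    1 + log q / (b * Δ) ≤ log (q / (b * t)) := by
  set A := log q / (b * Δ)
  have hbt : b * t ≤ q / exp 1 * (1 - A) :=
    calc b * t ≤ b * (q / (exp 1 * b) - q * log q / (exp 1 * b ^ 2 * Δ)) := by gcongr
      _ = q / exp 1 * (1 - A) := by simp only [A]; field_simp
  have hbt_exp : b * t * exp (1 + A) ≤ q :=
    calc b * t * exp (1 + A) ≤ q / exp 1 * exp (-A) * exp (1 + A) := by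
          refine mul_le_mul_of_nonneg_right (hbt.trans ?_) (exp_pos _).le
          gcongr
          exact one_sub_le_exp_neg A
      _ = q := by rw [mul_assoc, ← exp_add, show -A + (1 + A) = 1 by ring]; field_simp
  rw [le_log_iff_exp_le (by positivity), le_div_iff₀ (by positivity)]
  linarith

theorem stmt_9_general (q b t : ℕ) (hq : 0 < q) (hb : 0 < b) (ht : 0 < t) (Δ : ℝ) (hΔ : 0 < Δ)
    (htΔ : 4 * (b : ℝ) * Δ ≤ (t : ℝ))
    (htu : (t : ℝ) ≤ (q : ℝ) / (Real.exp 1 * b) -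
      (q : ℝ) * Real.log q / (Real.exp 1 * (b : ℝ) ^ 2 * Δ)) :
    ∏ i ∈ Finset.Icc t (q / b), (1 - 4 * (b : ℝ) * Δ / (i : ℝ)) ≤ ((q : ℝ) ^ 4)⁻¹ := by
  have htR : (0 : ℝ) < t := by exact_mod_cast ht
  have hc : 0 < 4 * (b : ℝ) * Δ := by positivity
  have hA : 0 ≤ log q / (b * Δ) := by
    have : 0 ≤ log q := log_nonneg (by exact_mod_cast hq)
    positivity
  have hkey := one_add_log_div_le_log_div (by positivity) (by positivity) htR hΔ.ne' htu
  have hbt : b * t ≤ q := by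
    have : 0 ≤ log (q / (b * t)) := by linarith
    rw [log_nonneg_iff (by positivity), one_le_div (by positivity)] at this
    exact_mod_cast this
  have hfactor : ∀ i ∈ Icc t (q / b), 4 * (b : ℝ) * Δ / i ≤ 1 := fun i hi ↦ by
    have hti : (t : ℝ) ≤ i := by exact_mod_cast (mem_Icc.1 hi).1
    rw [div_le_one (htR.trans_le hti)]
    exact htΔ.trans hti
  calc ∏ i ∈ Icc t (q / b), (1 - 4 * (b : ℝ) * Δ / i)
      ≤ exp (-∑ i ∈ Icc t (q / b), 4 * (b : ℝ) * Δ / i) := prod_one_sub_le_exp_neg_sum _ hfactor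
    _ ≤ exp (-log ((q : ℝ) ^ 4)) := by
        gcongr
        simp only [div_eq_mul_inv, ← mul_sum, log_pow]
        calc ((4 : ℕ) : ℝ) * log q ≤ 4 * b * Δ * (1 + log q / (b * Δ)) := by
              field_simp
              push_cast
              linarith
          _ ≤ 4 * b * Δ * ∑ i ∈ Icc t (q / b), (i : ℝ)⁻¹ := by
              gcongr
              exact hkey.trans (log_div_mul_le_sum_Icc_inv hb ht hbt)
    _ = ((q : ℝ) ^ 4)⁻¹ := by rw [exp_neg, exp_log (by positivity)]

theorem stmt_9 (q b t : ℕ) (hq : 0 < q) (hb : 0 < b) (ht : 0 < t) (Δ : ℝ) (hΔ : 0 < Δ)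
    (hqb : 3 * b < q) (hb8 : 8 ≤ 3 * b) (htΔ : 4 * (b : ℝ) * Δ ≤ (t : ℝ))
    (htu : (t : ℝ) ≤ (q : ℝ) / (Real.exp 1 * b) -
      (q : ℝ) * Real.log q / (Real.exp 1 * (b : ℝ) ^ 2 * Δ)) :
    ∏ i ∈ Finset.Icc t (q / b), (1 - 4 * (b : ℝ) * Δ / (i : ℝ)) ≤ ((q : ℝ) ^ 4)⁻¹ :=
  stmt_9_general q b t hq hb ht Δ hΔ htΔ htu
end

section
/- (Lopsided Lovász Local Lemma) Let (Ω, P) be a probability space, 𝓑 a finite family of events, and G = (𝓑, E) a lopsidependency graph for 𝓑. If there is a function x : 𝓑 → (0,1) such that for every B ∈ 𝓑, P[B] ≤ x(B)·∏_{B' ∈ Γ(B)} (1 − x(B')), then P[⋀_{B ∈ 𝓑} Bᶜ] ≥ ∏_{B ∈ 𝓑} (1 − x(B)) > 0. -/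
open MeasureTheory

theorem stmt_10 {Ω ι : Type*} [MeasurableSpace Ω]
    (P : Measure Ω) [IsProbabilityMeasure P]
    (𝓑 : Finset ι) (B : ι → Set Ω) (hmB : ∀ i, MeasurableSet (B i))
    (G : SimpleGraph ι) [DecidableRel G.Adj]
    (hlop : ∀ i ∈ 𝓑, ∀ S : Finset ι,
      (∀ j ∈ S, j ∈ 𝓑 ∧ ¬ G.Adj i j ∧ j ≠ i) →
      0 < P (⋂ j ∈ S, (B j)ᶜ) →
      ProbabilityTheory.cond P (⋂ j ∈ S, (B j)ᶜ) (B i) ≤ P (B i))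
    (x : ι → ℝ) (hx0 : ∀ i ∈ 𝓑, 0 < x i) (hx1 : ∀ i ∈ 𝓑, x i < 1)
    (hcond : ∀ i ∈ 𝓑, P (B i) ≤
      ENNReal.ofReal (x i * ∏ j ∈ 𝓑.filter (fun j => G.Adj i j), (1 - x j))) :
    ENNReal.ofReal (∏ i ∈ 𝓑, (1 - x i)) ≤ P (⋂ i ∈ 𝓑, (B i)ᶜ) ∧
      0 < P (⋂ i ∈ 𝓑, (B i)ᶜ) := by
  classical
  have hms : ∀ S : Finset ι, MeasurableSet (⋂ j ∈ S, (B j)ᶜ) :=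
    fun S => S.measurableSet_biInter fun j _ => (hmB j).compl
  -- splitting off one event
  have hsplit : ∀ (i : ι) (S : Finset ι),
      (P (⋂ j ∈ insert i S, (B j)ᶜ)).toReal
        = (P (⋂ j ∈ S, (B j)ᶜ)).toReal - (P (B i ∩ ⋂ j ∈ S, (B j)ᶜ)).toReal := by
    intro i S
    have h2 : P ((⋂ j ∈ S, (B j)ᶜ) ∩ B i) + P ((⋂ j ∈ S, (B j)ᶜ) \ B i)
        = P (⋂ j ∈ S, (B j)ᶜ) := measure_inter_add_diff _ (hmB i)
    have h1 : (⋂ j ∈ insert i S, (B j)ᶜ) = (⋂ j ∈ S, (B j)ᶜ) \ B i := by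
      rw [Finset.set_biInter_insert]
      ext ω
      simp only [Set.mem_inter_iff, Set.mem_compl_iff, Set.mem_diff]
      tauto
    have h3 : B i ∩ ⋂ j ∈ S, (B j)ᶜ = (⋂ j ∈ S, (B j)ᶜ) ∩ B i := Set.inter_comm _ _
    have h4 := congrArg ENNReal.toReal h2
    rw [ENNReal.toReal_add (measure_ne_top P _) (measure_ne_top P _)] at h4
    rw [h1, h3]
    linarith
  -- monotonicity
  have hmono : ∀ S T : Finset ι, S ⊆ T →
      (P (⋂ j ∈ T, (B j)ᶜ)).toReal ≤ (P (⋂ j ∈ S, (B j)ᶜ)).toReal := by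
    intro S T hST
    refine ENNReal.toReal_mono (measure_ne_top P _) (measure_mono ?_)
    intro ω hω
    simp only [Set.mem_iInter] at *
    exact fun j hj => hω j (hST hj)
  -- nonnegativity of factors
  have hfac : ∀ j ∈ 𝓑, 0 ≤ 1 - x j := fun j hj => by linarith [hx1 j hj]
  -- the key lemma, by strong induction on the cardinality of S
  have key : ∀ n : ℕ, ∀ S : Finset ι, S ⊆ 𝓑 → S.card < n →
      0 < (P (⋂ j ∈ S, (B j)ᶜ)).toReal ∧
      ∀ i ∈ 𝓑, i ∉ S →
        (P (B i ∩ ⋂ j ∈ S, (B j)ᶜ)).toReal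
          ≤ x i * (P (⋂ j ∈ S, (B j)ᶜ)).toReal := by
    intro n
    induction n with
    | zero => intro S _ h; exact absurd h (Nat.not_lt_zero _)
    | succ n IH =>
      intro S hS hcard
      have hcard' : S.card ≤ n := Nat.lt_succ_iff.mp hcard
      -- positivity
      have hpos : 0 < (P (⋂ j ∈ S, (B j)ᶜ)).toReal := by
        rcases S.eq_empty_or_nonempty with rfl | ⟨i₀, hi₀⟩
        · simp
        · have hs' : S = insert i₀ (S.erase i₀) := (Finset.insert_erase hi₀).symm
          have hcard2 : (S.erase i₀).card < n :=
            lt_of_lt_of_le (Finset.card_erase_lt_of_mem hi₀) hcard'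
          obtain ⟨hpos', hq'⟩ := IH (S.erase i₀) ((Finset.erase_subset _ _).trans hS) hcard2
          have hqb := hq' i₀ (hS hi₀) (Finset.notMem_erase _ _)
          rw [hs', hsplit i₀ (S.erase i₀)]
          have hxa := hx1 i₀ (hS hi₀)
          nlinarith
      refine ⟨hpos, ?_⟩
      intro i hi hiS
      set S₁ := S.filter (fun j => G.Adj i j) with hS₁
      set S₂ := S.filter (fun j => ¬ G.Adj i j) with hS₂
      have hS₁S : S₁ ⊆ S := Finset.filter_subset _ _
      have hS₂S : S₂ ⊆ S := Finset.filter_subset _ _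
      have hSsplit : S₂ ∪ S₁ = S := by
        ext j
        simp only [hS₁, hS₂, Finset.mem_union, Finset.mem_filter]
        tauto
      -- claim B : peeling off the neighbours one by one
      have claimB : ∀ T : Finset ι, T ⊆ S₁ →
          (∏ j ∈ T, (1 - x j)) * (P (⋂ j ∈ S₂, (B j)ᶜ)).toReal
            ≤ (P (⋂ j ∈ S₂ ∪ T, (B j)ᶜ)).toReal := by
        intro T
        induction T using Finset.induction_on with
        | empty => intro _; simp
        | @insert j T hjT IHT =>
          intro hins
          have hjS₁ : j ∈ S₁ := hins (Finset.mem_insert_self _ _)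
          have hTsub : T ⊆ S₁ := (Finset.subset_insert _ _).trans hins
          have hTj : j ∉ S₂ ∪ T := by
            simp only [Finset.mem_union, hjT, or_false]
            intro hjS₂
            rw [hS₂] at hjS₂
            rw [hS₁] at hjS₁
            exact (Finset.mem_filter.mp hjS₂).2 (Finset.mem_filter.mp hjS₁).2
          have hUsub : S₂ ∪ T ⊆ S := Finset.union_subset hS₂S (hTsub.trans hS₁S)
          have hcard2 : (S₂ ∪ T).card < n := by
            have hss : S₂ ∪ T ⊂ S :=
              Finset.ssubset_iff_of_subset hUsub |>.mpr ⟨j, hS₁S hjS₁, hTj⟩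
            exact lt_of_lt_of_le (Finset.card_lt_card hss) hcard'
          obtain ⟨hpos', hq'⟩ := IH (S₂ ∪ T) (hUsub.trans hS) hcard2
          have hqb := hq' j (hS (hS₁S hjS₁)) hTj
          have hUeq : S₂ ∪ insert j T = insert j (S₂ ∪ T) := by
            ext k; simp only [Finset.mem_union, Finset.mem_insert]; tauto
          rw [hUeq, hsplit j (S₂ ∪ T), Finset.prod_insert hjT, mul_assoc]
          have h2 := IHT hTsub
          have hxj : 0 ≤ 1 - x j := hfac j (hS (hS₁S hjS₁))
          have h3 : (1 - x j) * ((∏ j ∈ T, (1 - x j)) * (P (⋂ j ∈ S₂, (B j)ᶜ)).toReal)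
              ≤ (1 - x j) * (P (⋂ j ∈ S₂ ∪ T, (B j)ᶜ)).toReal :=
            mul_le_mul_of_nonneg_left h2 hxj
          nlinarith
      -- lopsidependency gives the bound with respect to S₂
      have hpos₂ : 0 < (P (⋂ j ∈ S₂, (B j)ᶜ)).toReal :=
        lt_of_lt_of_le hpos (hmono S₂ S hS₂S)
      have hP₂pos : 0 < P (⋂ j ∈ S₂, (B j)ᶜ) := (ENNReal.toReal_pos_iff.mp hpos₂).1
      have hP₂ne : P (⋂ j ∈ S₂, (B j)ᶜ) ≠ 0 := hP₂pos.ne'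
      have hlop' := hlop i hi S₂ (fun j hj => by
        rw [hS₂] at hj
        obtain ⟨hjS, hja⟩ := Finset.mem_filter.mp hj
        exact ⟨hS hjS, hja, fun h => hiS (h ▸ hjS)⟩) hP₂pos
      rw [ProbabilityTheory.cond_apply (hms S₂)] at hlop'
      have hmul : P ((⋂ j ∈ S₂, (B j)ᶜ) ∩ B i)
          ≤ P (B i) * P (⋂ j ∈ S₂, (B j)ᶜ) := by
        have h := mul_le_mul_left hlop' (P (⋂ j ∈ S₂, (B j)ᶜ))
        rwa [mul_comm (P (⋂ j ∈ S₂, (B j)ᶜ))⁻¹ _, mul_assoc,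
          ENNReal.inv_mul_cancel hP₂ne (measure_ne_top P _), mul_one] at h
      have hsub' : B i ∩ (⋂ j ∈ S, (B j)ᶜ) ⊆ (⋂ j ∈ S₂, (B j)ᶜ) ∩ B i := by
        rw [Set.inter_comm]
        refine Set.inter_subset_inter_left _ ?_
        intro ω hω
        simp only [Set.mem_iInter] at *
        exact fun j hj => hω j (hS₂S hj)
      have hq2 : (P (B i ∩ ⋂ j ∈ S, (B j)ᶜ)).toReal
          ≤ (P (B i)).toReal * (P (⋂ j ∈ S₂, (B j)ᶜ)).toReal := by
        rw [← ENNReal.toReal_mul]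
        exact ENNReal.toReal_mono (by finiteness)
          (le_trans (measure_mono hsub') hmul)
      -- numeric bound on P (B i)
      have hxprod0 : ∀ T : Finset ι, T ⊆ 𝓑 → 0 ≤ ∏ j ∈ T, (1 - x j) := by
        intro T hT
        exact Finset.prod_nonneg fun j hj => hfac j (hT hj)
      have hxB : (P (B i)).toReal
          ≤ x i * ∏ j ∈ 𝓑.filter (fun j => G.Adj i j), (1 - x j) := by
        refine ENNReal.toReal_le_of_le_ofReal ?_ (hcond i hi)
        exact mul_nonneg (hx0 i hi).le (hxprod0 _ (Finset.filter_subset _ _))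
      have hS₁sub : S₁ ⊆ 𝓑.filter (fun j => G.Adj i j) := by
        intro j hj
        rw [hS₁] at hj
        obtain ⟨hjS, hja⟩ := Finset.mem_filter.mp hj
        exact Finset.mem_filter.mpr ⟨hS hjS, hja⟩
      have hprodle : (∏ j ∈ 𝓑.filter (fun j => G.Adj i j), (1 - x j))
          ≤ ∏ j ∈ S₁, (1 - x j) := by
        rw [← Finset.prod_sdiff hS₁sub]
        have h1 : (∏ j ∈ 𝓑.filter (fun j => G.Adj i j) \ S₁, (1 - x j)) ≤ 1 :=
          Finset.prod_le_one
            (fun j hj => hfac j (Finset.filter_subset _ _ (Finset.mem_sdiff.mp hj).1))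
            (fun j hj => by
              have := hx0 j (Finset.filter_subset _ _ (Finset.mem_sdiff.mp hj).1)
              linarith)
        have h2 : 0 ≤ ∏ j ∈ S₁, (1 - x j) := hxprod0 S₁ (hS₁S.trans hS)
        nlinarith
      -- combine everything
      have hB := claimB S₁ (le_refl _)
      rw [hSsplit] at hB
      have hxi := hx0 i hi
      have hpB : 0 ≤ (P (B i)).toReal := ENNReal.toReal_nonneg
      calc (P (B i ∩ ⋂ j ∈ S, (B j)ᶜ)).toReal
          ≤ (P (B i)).toReal * (P (⋂ j ∈ S₂, (B j)ᶜ)).toReal := hq2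
        _ ≤ (x i * ∏ j ∈ 𝓑.filter (fun j => G.Adj i j), (1 - x j))
              * (P (⋂ j ∈ S₂, (B j)ᶜ)).toReal :=
            mul_le_mul_of_nonneg_right hxB ENNReal.toReal_nonneg
        _ ≤ (x i * ∏ j ∈ S₁, (1 - x j)) * (P (⋂ j ∈ S₂, (B j)ᶜ)).toReal := by
            refine mul_le_mul_of_nonneg_right ?_ ENNReal.toReal_nonneg
            exact mul_le_mul_of_nonneg_left hprodle hxi.le
        _ = x i * ((∏ j ∈ S₁, (1 - x j)) * (P (⋂ j ∈ S₂, (B j)ᶜ)).toReal) := by ring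
        _ ≤ x i * (P (⋂ j ∈ S, (B j)ᶜ)).toReal :=
            mul_le_mul_of_nonneg_left hB hxi.le
  -- final product bound
  have final : ∀ T : Finset ι, T ⊆ 𝓑 →
      (∏ j ∈ T, (1 - x j)) ≤ (P (⋂ j ∈ T, (B j)ᶜ)).toReal := by
    intro T
    induction T using Finset.induction_on with
    | empty => intro _; simp
    | @insert j T hjT IHT =>
      intro hins
      have hj𝓑 : j ∈ 𝓑 := hins (Finset.mem_insert_self _ _)
      have hTsub : T ⊆ 𝓑 := (Finset.subset_insert _ _).trans hins
      obtain ⟨hposT, hqT⟩ := key (T.card + 1) T hTsub (Nat.lt_succ_self _)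
      have hqb := hqT j hj𝓑 hjT
      have hT := IHT hTsub
      rw [hsplit j T, Finset.prod_insert hjT]
      have hxj : 0 ≤ 1 - x j := hfac j hj𝓑
      nlinarith
  have h1 := final 𝓑 (le_refl _)
  obtain ⟨h2, -⟩ := key (𝓑.card + 1) 𝓑 (le_refl _) (Nat.lt_succ_self _)
  constructor
  · rw [← ENNReal.ofReal_toReal (measure_ne_top P (⋂ i ∈ 𝓑, (B i)ᶜ))]
    exact ENNReal.ofReal_le_ofReal h1
  · exact (ENNReal.toReal_pos_iff.mp h2).1
end

section
/- Let (Ω, P) be a probability space, 𝓑 a finite family of events with lopsidependency graph G, and x : 𝓑 → (0,1) satisfying P[B] ≤ x(B)·∏_{B' ∈ Γ(B)} (1 − x(B')) for every B ∈ 𝓑. Then for every B ∈ 𝓑 and every subset S ⊆ 𝓑 \ {B}, P[B ∣ ⋀_{B' ∈ S} B'ᶜ] ≤ x(B) (in particular the conditioning event has positive probability). -/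
/-!
We prove, by strong induction on `S`, the multiplicative form
`P[(⋂ S, B jᶜ) ∩ B i] ≤ x i * P[⋂ S, B jᶜ]` for `i ∉ S`. Split `S` into the neighbours `S₁` of `i`
and the rest `S₂`. Lopsidependence bounds the left side by `P[⋂ S₂] * P[B i]`, hence by
`x i * ∏_{S₁} (1 - x j) * P[⋂ S₂]` using the hypothesis on `P[B i]`; removing the events of `S₁`
one at a time, the induction hypothesis shows each removal keeps at least a `(1 - x j)` fraction of
the mass, so this is at most `x i * P[⋂ S]`. The same chain of removals, started from the whole
space, gives `P[⋂ S] ≥ ∏_S (1 - x j) > 0`.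
-/

open MeasureTheory ProbabilityTheory ENNReal

theorem one_sub_mul_measure_le_measure_diff {Ω : Type*} [MeasurableSpace Ω] {μ : Measure Ω}
    {s t : Set Ω} {p : ℝ≥0∞} (hs : μ s ≠ ∞) (h : μ (s ∩ t) ≤ p * μ s) :
    (1 - p) * μ s ≤ μ (s \ t) :=
  calc (1 - p) * μ s = μ s - p * μ s := by rw [ENNReal.sub_mul fun _ _ ↦ hs, one_mul]
    _ ≤ μ s - μ (s ∩ t) := tsub_le_tsub_left h _
    _ ≤ μ (s \ t) := tsub_le_iff_left.2 (measure_le_inter_add_sdiff μ s t)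

theorem measure_inter_le_mul_of_cond_le {Ω : Type*} [MeasurableSpace Ω] {μ : Measure Ω}
    [IsFiniteMeasure μ] {s t : Set Ω} (ht : MeasurableSet t)
    (h : 0 < μ s → μ[t | s] ≤ μ t) : μ (s ∩ t) ≤ μ s * μ t := by
  rcases eq_zero_or_pos (μ s) with hs | hs
  · rw [hs, zero_mul]
    exact (measure_mono Set.inter_subset_left).trans hs.le
  · rw [← ENNReal.inv_mul_le_iff hs.ne' (measure_ne_top μ s), ← cond_apply' ht]
    exact h hs

theorem cond_le_of_measure_inter_le_mul {Ω : Type*} [MeasurableSpace Ω] {μ : Measure Ω}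
    [IsFiniteMeasure μ] {s t : Set Ω} {c : ℝ≥0∞} (ht : MeasurableSet t) (hs : 0 < μ s)
    (h : μ (s ∩ t) ≤ c * μ s) : μ[t | s] ≤ c := by
  rw [cond_apply' ht, ENNReal.inv_mul_le_iff hs.ne' (measure_ne_top μ s), mul_comm]
  exact h

section LovaszLocalLemma

variable {Ω ι : Type*} [MeasurableSpace Ω] {μ : Measure Ω} [IsFiniteMeasure μ] {B : ι → Set Ω}
  [DecidableEq ι]

theorem prod_one_sub_mul_measure_le (y : ι → ℝ≥0∞) (U T : Finset ι)
    (h : ∀ a ∈ T, ∀ T' ⊆ T.erase a,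
      μ ((⋂ j ∈ T' ∪ U, (B j)ᶜ) ∩ B a) ≤ y a * μ (⋂ j ∈ T' ∪ U, (B j)ᶜ)) :
    (∏ j ∈ T, (1 - y j)) * μ (⋂ j ∈ U, (B j)ᶜ) ≤ μ (⋂ j ∈ T ∪ U, (B j)ᶜ) := by
  induction T using Finset.induction_on with
  | empty => simp
  | insert a T ha ih =>
    have ih' := ih fun b hb T' hT' ↦ h b (Finset.mem_insert_of_mem hb) T'
      (hT'.trans (Finset.erase_subset_erase b (Finset.subset_insert a T)))
    have hstep := h a (Finset.mem_insert_self a T) T (by rw [Finset.erase_insert ha])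
    calc (∏ j ∈ insert a T, (1 - y j)) * μ (⋂ j ∈ U, (B j)ᶜ)
        = (1 - y a) * ((∏ j ∈ T, (1 - y j)) * μ (⋂ j ∈ U, (B j)ᶜ)) := by
          rw [Finset.prod_insert ha, mul_assoc]
      _ ≤ (1 - y a) * μ (⋂ j ∈ T ∪ U, (B j)ᶜ) := by gcongr
      _ ≤ μ (⋂ j ∈ insert a T ∪ U, (B j)ᶜ) := by
          rw [Finset.insert_union, Finset.set_biInter_insert, Set.inter_comm, ← Set.sdiff_eq]
          exact one_sub_mul_measure_le_measure_diff (measure_ne_top μ _) hstep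

variable {𝓑 : Finset ι} {G : SimpleGraph ι} [DecidableRel G.Adj] {y : ι → ℝ≥0∞}

theorem measure_biInter_compl_inter_le_mul
    (hlop : ∀ i ∈ 𝓑, ∀ S : Finset ι, (∀ j ∈ S, j ∈ 𝓑 ∧ ¬ G.Adj i j ∧ j ≠ i) →
      μ ((⋂ j ∈ S, (B j)ᶜ) ∩ B i) ≤ μ (⋂ j ∈ S, (B j)ᶜ) * μ (B i))
    (hcond : ∀ i ∈ 𝓑, μ (B i) ≤ y i * ∏ j ∈ 𝓑.filter (G.Adj i), (1 - y j))
    (S : Finset ι) (hS : S ⊆ 𝓑) {i : ι} (hi : i ∈ 𝓑) (hiS : i ∉ S) :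
    μ ((⋂ j ∈ S, (B j)ᶜ) ∩ B i) ≤ y i * μ (⋂ j ∈ S, (B j)ᶜ) := by
  induction S using Finset.strongInduction generalizing i with
  | H S ih =>
  set S₁ := S.filter (G.Adj i)
  set S₂ := S.filter (¬ G.Adj i ·)
  have hS₂ : ∀ j ∈ S₂, j ∈ 𝓑 ∧ ¬ G.Adj i j ∧ j ≠ i := fun j hj ↦ by
    obtain ⟨hjS, hij⟩ := Finset.mem_filter.1 hj
    exact ⟨hS hjS, hij, fun h ↦ hiS (h ▸ hjS)⟩
  have hS₁ : S₁ ⊆ 𝓑.filter (G.Adj i) := Finset.filter_subset_filter _ hS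
  have hden : (∏ j ∈ S₁, (1 - y j)) * μ (⋂ j ∈ S₂, (B j)ᶜ) ≤ μ (⋂ j ∈ S₁ ∪ S₂, (B j)ᶜ) := by
    refine prod_one_sub_mul_measure_le y S₂ S₁ fun a ha T' hT' ↦ ?_
    have haS : a ∈ S := Finset.mem_of_mem_filter a ha
    have haT' : a ∉ T' ∪ S₂ := by
      simp only [Finset.mem_union, not_or]
      exact ⟨fun h ↦ Finset.notMem_erase a S₁ (hT' h), fun h ↦ (hS₂ a h).2.1 (Finset.mem_filter.1 ha).2⟩
    have hsub : T' ∪ S₂ ⊆ S :=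
      Finset.union_subset (hT'.trans ((Finset.erase_subset a S₁).trans (Finset.filter_subset _ S)))
        (Finset.filter_subset _ S)
    exact ih _ (hsub.ssubset_of_ne fun h ↦ haT' (h ▸ haS)) (hsub.trans hS)
      (hS haS) haT'
  calc μ ((⋂ j ∈ S, (B j)ᶜ) ∩ B i)
      ≤ μ ((⋂ j ∈ S₂, (B j)ᶜ) ∩ B i) :=
        measure_mono (Set.inter_subset_inter_left _ (Set.biInter_subset_biInter_left (Finset.filter_subset _ S)))
    _ ≤ μ (⋂ j ∈ S₂, (B j)ᶜ) * μ (B i) := hlop i hi S₂ hS₂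
    _ ≤ μ (⋂ j ∈ S₂, (B j)ᶜ) * (y i * ∏ j ∈ S₁, (1 - y j)) := by
        refine mul_le_mul_right ((hcond i hi).trans (mul_le_mul_right ?_ _)) _
        exact Finset.prod_le_prod_of_subset_of_le_one' hS₁ fun _ _ _ ↦ tsub_le_self
    _ = y i * ((∏ j ∈ S₁, (1 - y j)) * μ (⋂ j ∈ S₂, (B j)ᶜ)) := by ring
    _ ≤ y i * μ (⋂ j ∈ S, (B j)ᶜ) := by
        rw [← Finset.filter_union_filter_not_eq (G.Adj i) S]
        gcongr

theorem measure_biInter_compl_pos [IsProbabilityMeasure μ]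
    (hlop : ∀ i ∈ 𝓑, ∀ S : Finset ι, (∀ j ∈ S, j ∈ 𝓑 ∧ ¬ G.Adj i j ∧ j ≠ i) →
      μ ((⋂ j ∈ S, (B j)ᶜ) ∩ B i) ≤ μ (⋂ j ∈ S, (B j)ᶜ) * μ (B i))
    (hcond : ∀ i ∈ 𝓑, μ (B i) ≤ y i * ∏ j ∈ 𝓑.filter (G.Adj i), (1 - y j))
    (hy : ∀ i ∈ 𝓑, y i < 1) {S : Finset ι} (hS : S ⊆ 𝓑) :
    0 < μ (⋂ j ∈ S, (B j)ᶜ) := by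
  have hprod : 0 < ∏ j ∈ S, (1 - y j) :=
    CanonicallyOrderedAdd.prod_pos.2 fun j hj ↦ tsub_pos_of_lt (hy j (hS hj))
  have hchain := prod_one_sub_mul_measure_le (μ := μ) (B := B) y ∅ S fun a ha T' hT' ↦ by
    rw [Finset.union_empty]
    exact measure_biInter_compl_inter_le_mul hlop hcond T'
      (hT'.trans ((Finset.erase_subset a S).trans hS)) (hS ha)
      fun h ↦ Finset.notMem_erase a S (hT' h)
  simp only [Finset.notMem_empty, Set.iInter_of_empty, Set.iInter_univ, measure_univ, mul_one,
    Finset.union_empty] at hchain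
  exact hprod.trans_le hchain

end LovaszLocalLemma

theorem stmt_11 {Ω ι : Type*} [MeasurableSpace Ω]
    (P : Measure Ω) [IsProbabilityMeasure P]
    (𝓑 : Finset ι) (B : ι → Set Ω) (hmB : ∀ i, MeasurableSet (B i))
    (G : SimpleGraph ι) [DecidableRel G.Adj]
    (hlop : ∀ i ∈ 𝓑, ∀ S : Finset ι,
      (∀ j ∈ S, j ∈ 𝓑 ∧ ¬ G.Adj i j ∧ j ≠ i) →
      0 < P (⋂ j ∈ S, (B j)ᶜ) →
      ProbabilityTheory.cond P (⋂ j ∈ S, (B j)ᶜ) (B i) ≤ P (B i))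
    (x : ι → ℝ) (hx0 : ∀ i ∈ 𝓑, 0 < x i) (hx1 : ∀ i ∈ 𝓑, x i < 1)
    (hcond : ∀ i ∈ 𝓑, P (B i) ≤
      ENNReal.ofReal (x i * ∏ j ∈ 𝓑.filter (fun j => G.Adj i j), (1 - x j))) :
    ∀ i ∈ 𝓑, ∀ S : Finset ι, (∀ j ∈ S, j ∈ 𝓑 ∧ j ≠ i) →
      0 < P (⋂ j ∈ S, (B j)ᶜ) ∧
        ProbabilityTheory.cond P (⋂ j ∈ S, (B j)ᶜ) (B i) ≤ ENNReal.ofReal (x i) := by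
  classical
  intro i hi S hS
  have hlop' := fun i hi S hS ↦ measure_inter_le_mul_of_cond_le (hmB i) (hlop i hi S hS)
  have hcond' : ∀ i ∈ 𝓑, P (B i) ≤
      ENNReal.ofReal (x i) * ∏ j ∈ 𝓑.filter (G.Adj i), (1 - ENNReal.ofReal (x j)) := by
    intro i hi
    convert hcond i hi using 1
    rw [ENNReal.ofReal_mul (hx0 i hi).le, ENNReal.ofReal_prod_of_nonneg fun j hj ↦
      sub_nonneg.2 (hx1 j (Finset.mem_filter.1 hj).1).le]
    refine congrArg _ (Finset.prod_congr rfl fun j hj ↦ ?_)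
    rw [ENNReal.ofReal_sub _ (hx0 j (Finset.mem_filter.1 hj).1).le, ENNReal.ofReal_one]
  have hSB : S ⊆ 𝓑 := fun j hj ↦ (hS j hj).1
  have hpos := measure_biInter_compl_pos hlop' hcond'
    (fun j hj ↦ ENNReal.ofReal_lt_one.2 (hx1 j hj)) hSB
  exact ⟨hpos, cond_le_of_measure_inter_le_mul (hmB i) hpos
    (measure_biInter_compl_inter_le_mul hlop' hcond' S hSB hi fun h ↦ (hS i h).2 rfl)⟩
end

section
/- Let (Ω, P) be a probability space, 𝓑 a finite family of events with lopsidependency graph G, and x : 𝓑 → (0,1) satisfying the local lemma condition P[B] ≤ x(B)·∏_{B' ∈ Γ(B)} (1 − x(B')) for every B ∈ 𝓑. Let A be any event and T ⊆ 𝓑 a subset such that A is non-lopsidependent with respect to every subset of 𝓑 \ T (i.e., P[A ∣ ⋀_{B ∈ S} Bᶜ] ≤ P[A] for all S ⊆ 𝓑 \ T with positive conditioning probability). Then P[A ∣ ⋀_{B ∈ 𝓑} Bᶜ] ≤ P[A] · ∏_{B ∈ T} (1 − x(B))^(−1). -/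
open MeasureTheory ProbabilityTheory

private lemma lll_chain {Ω : Type*} [MeasurableSpace Ω] (P : Measure Ω) [IsProbabilityMeasure P]
    {s t : Set Ω} (u : Set Ω) (hs : MeasurableSet s) (ht : MeasurableSet t)
    (h0 : P (s ∩ t) ≠ 0) :
    P[t ∩ u | s] = P[t|s] * P[u | s ∩ t] := by
  rw [cond_apply hs, cond_apply hs, cond_apply (hs.inter ht), ← Set.inter_assoc,
    mul_assoc, ← mul_assoc (P (s ∩ t)), ENNReal.mul_inv_cancel h0 (measure_ne_top _ _), one_mul]

private lemma lll_prod_le {ι : Type*} {s t : Finset ι} (h : s ⊆ t) (f : ι → ℝ)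
    (h0 : ∀ i ∈ t, 0 ≤ f i) (h1 : ∀ i ∈ t, f i ≤ 1) :
    ∏ i ∈ t, f i ≤ ∏ i ∈ s, f i := by
  classical
  rw [← Finset.prod_sdiff h]
  exact mul_le_of_le_one_left (Finset.prod_nonneg fun i hi => h0 i (h hi))
    (Finset.prod_le_one (fun i hi => h0 i (Finset.mem_sdiff.1 hi).1)
      (fun i hi => h1 i (Finset.mem_sdiff.1 hi).1))

private lemma lll_compl {Ω : Type*} [MeasurableSpace Ω] (P : Measure Ω) [IsProbabilityMeasure P]
    {s b : Set Ω} (hb : MeasurableSet b) (hpos : P s ≠ 0) {y : ℝ} (hy0 : 0 ≤ y)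
    (hy : P[b|s] ≤ ENNReal.ofReal y) :
    ENNReal.ofReal (1 - y) ≤ P[bᶜ|s] := by
  haveI := cond_isProbabilityMeasure (μ := P) hpos
  rw [prob_compl_eq_one_sub hb]
  calc ENNReal.ofReal (1 - y) = 1 - ENNReal.ofReal y := by
        rw [ENNReal.ofReal_sub _ hy0, ENNReal.ofReal_one]
    _ ≤ 1 - P[b|s] := tsub_le_tsub_left hy 1

private lemma lll_biInter_union {ι Ω : Type*} [DecidableEq ι] (S₁ S₂ : Finset ι) (f : ι → Set Ω) :
    (⋂ j ∈ S₁ ∪ S₂, f j) = (⋂ j ∈ S₁, f j) ∩ ⋂ j ∈ S₂, f j := by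
  ext ω
  simp only [Set.mem_iInter, Set.mem_inter_iff, Finset.mem_union, or_imp, forall_and]

private lemma lll_biInter_emptyset {ι Ω : Type*} (f : ι → Set Ω) :
    (⋂ j ∈ (∅ : Finset ι), f j) = Set.univ := by simp

private lemma lll_main {Ω ι : Type*} [MeasurableSpace Ω]
    (P : Measure Ω) [IsProbabilityMeasure P]
    (𝓑 : Finset ι) (B : ι → Set Ω) (hmB : ∀ i, MeasurableSet (B i))
    (G : SimpleGraph ι) [DecidableRel G.Adj]
    (hlop : ∀ i ∈ 𝓑, ∀ S : Finset ι,
      (∀ j ∈ S, j ∈ 𝓑 ∧ ¬ G.Adj i j ∧ j ≠ i) →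
      0 < P (⋂ j ∈ S, (B j)ᶜ) →
      P[B i | ⋂ j ∈ S, (B j)ᶜ] ≤ P (B i))
    (x : ι → ℝ) (hx0 : ∀ i ∈ 𝓑, 0 < x i) (hx1 : ∀ i ∈ 𝓑, x i < 1)
    (hcond : ∀ i ∈ 𝓑, P (B i) ≤
      ENNReal.ofReal (x i * ∏ j ∈ 𝓑.filter (fun j => G.Adj i j), (1 - x j))) :
    ∀ n : ℕ, ∀ S : Finset ι, S ⊆ 𝓑 → S.card ≤ n →
      0 < P (⋂ j ∈ S, (B j)ᶜ) ∧
      ∀ i ∈ 𝓑, i ∉ S → P[B i | ⋂ j ∈ S, (B j)ᶜ] ≤ ENNReal.ofReal (x i) := by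
  classical
  have hmI : ∀ S : Finset ι, MeasurableSet (⋂ j ∈ S, (B j)ᶜ) :=
    fun S => S.measurableSet_biInter (fun j _ => (hmB j).compl)
  intro n
  induction n with
  | zero =>
    intro S hS hcard
    have hSe : S = ∅ := Finset.card_eq_zero.1 (Nat.le_zero.1 hcard)
    subst hSe
    rw [lll_biInter_emptyset]
    constructor
    · simp
    · intro i hi _
      rw [cond_univ]
      refine le_trans (hcond i hi) (ENNReal.ofReal_le_ofReal ?_)
      refine mul_le_of_le_one_right (hx0 i hi).le ?_
      refine Finset.prod_le_one (fun j hj => ?_) (fun j hj => ?_)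
      · have := hx1 j (Finset.mem_filter.1 hj).1; linarith
      · have := hx0 j (Finset.mem_filter.1 hj).1; linarith
  | succ n ih =>
    intro S hS hcard
    by_cases hc : S.card ≤ n
    · exact ih S hS hc
    have hcard' : S.card = n + 1 := by omega
    -- positivity of P (⋂ j ∈ S, (B j)ᶜ)
    have hposS : 0 < P (⋂ j ∈ S, (B j)ᶜ) := by
      obtain ⟨i₀, hi₀⟩ := Finset.card_pos.1 (by omega : 0 < S.card)
      set S' := S.erase i₀ with hS'def
      have hS'sub : S' ⊆ 𝓑 := (Finset.erase_subset _ _).trans hS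
      have hS'card : S'.card ≤ n := by
        rw [hS'def, Finset.card_erase_of_mem hi₀]; omega
      obtain ⟨hpos', hK'⟩ := ih S' hS'sub hS'card
      have hi₀𝓑 : i₀ ∈ 𝓑 := hS hi₀
      have hcompl : ENNReal.ofReal (1 - x i₀) ≤ P[(B i₀)ᶜ | ⋂ j ∈ S', (B j)ᶜ] :=
        lll_compl P (hmB i₀) hpos'.ne' (hx0 i₀ hi₀𝓑).le
          (hK' i₀ hi₀𝓑 (Finset.notMem_erase _ _))
      have hmulW : P (⋂ j ∈ S', (B j)ᶜ) * P[(B i₀)ᶜ | ⋂ j ∈ S', (B j)ᶜ]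
          = P ((⋂ j ∈ S', (B j)ᶜ) ∩ (B i₀)ᶜ) := by
        rw [cond_apply (hmI S'), ← mul_assoc,
          ENNReal.mul_inv_cancel hpos'.ne' (measure_ne_top _ _), one_mul]
      have hIS : (⋂ j ∈ S, (B j)ᶜ) = (⋂ j ∈ S', (B j)ᶜ) ∩ (B i₀)ᶜ := by
        conv_lhs => rw [← Finset.insert_erase hi₀]
        rw [Finset.set_biInter_insert, Set.inter_comm]
      rw [hIS, ← hmulW]
      have h1 : (0:ENNReal) < ENNReal.ofReal (1 - x i₀) := by
        rw [ENNReal.ofReal_pos]; have := hx1 i₀ hi₀𝓑; linarith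
      exact ENNReal.mul_pos hpos'.ne' (lt_of_lt_of_le h1 hcompl).ne'
    refine ⟨hposS, ?_⟩
    -- peeling lemma
    have peel : ∀ S₂ : Finset ι, 0 < P (⋂ j ∈ S₂, (B j)ᶜ) → ∀ S₁ : Finset ι,
        Disjoint S₁ S₂ → S₁ ∪ S₂ ⊆ 𝓑 → (S₁ ∪ S₂).card ≤ n + 1 →
        ENNReal.ofReal (∏ j ∈ S₁, (1 - x j)) ≤ P[⋂ j ∈ S₁, (B j)ᶜ | ⋂ j ∈ S₂, (B j)ᶜ] := by
      intro S₂ hpos2 S₁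
      induction S₁ using Finset.induction_on with
      | empty =>
        intro _ _ _
        rw [lll_biInter_emptyset, Finset.prod_empty, ENNReal.ofReal_one,
          cond_apply (hmI S₂), Set.inter_univ,
          ENNReal.inv_mul_cancel hpos2.ne' (measure_ne_top _ _)]
      | @insert j₀ S₁ hj₀ ihp =>
        intro hdisj hsub hcardu
        have hj₀S₂ : j₀ ∉ S₂ := Finset.disjoint_left.1 hdisj (Finset.mem_insert_self _ _)
        have hj₀𝓑 : j₀ ∈ 𝓑 := hsub (Finset.mem_union_left _ (Finset.mem_insert_self _ _))
        have hj₀u : j₀ ∉ S₁ ∪ S₂ := by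
          simp only [Finset.mem_union, not_or]; exact ⟨hj₀, hj₀S₂⟩
        have hins : insert j₀ S₁ ∪ S₂ = insert j₀ (S₁ ∪ S₂) := by
          rw [Finset.insert_union]
        have hsub' : S₁ ∪ S₂ ⊆ 𝓑 := (Finset.subset_insert _ _).trans (hins ▸ hsub)
        have hcard'' : (S₁ ∪ S₂).card ≤ n := by
          have h2 : (insert j₀ (S₁ ∪ S₂)).card = (S₁ ∪ S₂).card + 1 :=
            Finset.card_insert_of_notMem hj₀u
          rw [hins] at hcardu; omega
        obtain ⟨hposU, hKU⟩ := ih (S₁ ∪ S₂) hsub' hcard''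
        have hIU : (⋂ j ∈ S₂, (B j)ᶜ) ∩ (⋂ j ∈ S₁, (B j)ᶜ) = ⋂ j ∈ S₁ ∪ S₂, (B j)ᶜ := by
          rw [lll_biInter_union, Set.inter_comm]
        have hI_ins : (⋂ j ∈ insert j₀ S₁, (B j)ᶜ) = (⋂ j ∈ S₁, (B j)ᶜ) ∩ (B j₀)ᶜ := by
          rw [Finset.set_biInter_insert, Set.inter_comm]
        rw [hI_ins, lll_chain P _ (hmI S₂) (hmI S₁) (by rw [hIU]; exact hposU.ne'), hIU]
        have hdisj' : Disjoint S₁ S₂ :=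
          Finset.disjoint_of_subset_left (Finset.subset_insert _ _) hdisj
        have h1 := ihp hdisj' hsub' (by omega)
        have h2 : ENNReal.ofReal (1 - x j₀) ≤ P[(B j₀)ᶜ | ⋂ j ∈ S₁ ∪ S₂, (B j)ᶜ] :=
          lll_compl P (hmB j₀) hposU.ne' (hx0 j₀ hj₀𝓑).le (hKU j₀ hj₀𝓑 hj₀u)
        calc ENNReal.ofReal (∏ j ∈ insert j₀ S₁, (1 - x j))
            = ENNReal.ofReal (∏ j ∈ S₁, (1 - x j)) * ENNReal.ofReal (1 - x j₀) := by
              rw [Finset.prod_insert hj₀,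
                ENNReal.ofReal_mul (by have := hx1 j₀ hj₀𝓑; linarith), mul_comm]
          _ ≤ _ := mul_le_mul' h1 h2
    -- main bound
    intro i hi hiS
    set S₁ := S.filter (fun j => G.Adj i j) with hS₁def
    set S₂ := S.filter (fun j => ¬ G.Adj i j) with hS₂def
    have hunion : S₁ ∪ S₂ = S := Finset.filter_union_filter_not_eq _ S
    have hdisj : Disjoint S₁ S₂ := Finset.disjoint_filter_filter_not S S _
    have hPosSub : ∀ W : Finset ι, W ⊆ S → 0 < P (⋂ j ∈ W, (B j)ᶜ) := by
      intro W hW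
      rcases eq_or_ne W S with rfl | hne
      · exact hposS
      · refine (ih W (hW.trans hS) ?_).1
        have := Finset.card_lt_card (Finset.ssubset_iff_subset_ne.2 ⟨hW, hne⟩)
        omega
    have hpos2 : 0 < P (⋂ j ∈ S₂, (B j)ᶜ) := hPosSub S₂ (Finset.filter_subset _ _)
    have hd := peel S₂ hpos2 S₁ hdisj (by rw [hunion]; exact hS) (by rw [hunion]; omega)
    have hIS2 : (⋂ j ∈ S₂, (B j)ᶜ) ∩ (⋂ j ∈ S₁, (B j)ᶜ) = ⋂ j ∈ S, (B j)ᶜ := by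
      rw [Set.inter_comm, ← lll_biInter_union, hunion]
    have hchain : P[(⋂ j ∈ S₁, (B j)ᶜ) ∩ B i | ⋂ j ∈ S₂, (B j)ᶜ]
        = P[⋂ j ∈ S₁, (B j)ᶜ | ⋂ j ∈ S₂, (B j)ᶜ] * P[B i | ⋂ j ∈ S, (B j)ᶜ] := by
      rw [lll_chain P (B i) (hmI S₂) (hmI S₁) (by rw [hIS2]; exact hposS.ne'), hIS2]
    set D := ∏ j ∈ 𝓑.filter (fun j => G.Adj i j), (1 - x j) with hDdef
    have hD0 : 0 < D := Finset.prod_pos fun j hj => by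
      have := hx1 j (Finset.mem_filter.1 hj).1; linarith
    have hS₁sub : S₁ ⊆ 𝓑.filter (fun j => G.Adj i j) := by
      intro j hj
      rw [Finset.mem_filter] at hj ⊢
      exact ⟨hS hj.1, hj.2⟩
    have hDle : D ≤ ∏ j ∈ S₁, (1 - x j) := by
      refine lll_prod_le hS₁sub _ (fun j hj => ?_) (fun j hj => ?_)
      · have := hx1 j (Finset.mem_filter.1 hj).1; linarith
      · have := hx0 j (Finset.mem_filter.1 hj).1; linarith
    have hnum : P[(⋂ j ∈ S₁, (B j)ᶜ) ∩ B i | ⋂ j ∈ S₂, (B j)ᶜ]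
        ≤ ENNReal.ofReal (x i) * ENNReal.ofReal D := by
      calc P[(⋂ j ∈ S₁, (B j)ᶜ) ∩ B i | ⋂ j ∈ S₂, (B j)ᶜ]
          ≤ P[B i | ⋂ j ∈ S₂, (B j)ᶜ] := measure_mono Set.inter_subset_right
        _ ≤ P (B i) := by
            refine hlop i hi S₂ (fun j hj => ?_) hpos2
            rw [Finset.mem_filter] at hj
            exact ⟨hS hj.1, hj.2, fun h => hiS (h ▸ hj.1)⟩
        _ ≤ ENNReal.ofReal (x i * D) := hcond i hi
        _ = ENNReal.ofReal (x i) * ENNReal.ofReal D := ENNReal.ofReal_mul (hx0 i hi).le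
    have key : ENNReal.ofReal D * P[B i | ⋂ j ∈ S, (B j)ᶜ]
        ≤ ENNReal.ofReal D * ENNReal.ofReal (x i) := by
      calc ENNReal.ofReal D * P[B i | ⋂ j ∈ S, (B j)ᶜ]
          ≤ ENNReal.ofReal (∏ j ∈ S₁, (1 - x j)) * P[B i | ⋂ j ∈ S, (B j)ᶜ] :=
            mul_le_mul_left (ENNReal.ofReal_le_ofReal hDle) _
        _ ≤ P[⋂ j ∈ S₁, (B j)ᶜ | ⋂ j ∈ S₂, (B j)ᶜ] * P[B i | ⋂ j ∈ S, (B j)ᶜ] :=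
            mul_le_mul_left hd _
        _ = P[(⋂ j ∈ S₁, (B j)ᶜ) ∩ B i | ⋂ j ∈ S₂, (B j)ᶜ] := hchain.symm
        _ ≤ ENNReal.ofReal (x i) * ENNReal.ofReal D := hnum
        _ = ENNReal.ofReal D * ENNReal.ofReal (x i) := mul_comm _ _
    exact (ENNReal.mul_le_mul_iff_right ((ENNReal.ofReal_pos.2 hD0).ne') ENNReal.ofReal_ne_top).1 key

theorem stmt_12 {Ω ι : Type*} [MeasurableSpace Ω]
    (P : Measure Ω) [IsProbabilityMeasure P]
    (𝓑 : Finset ι) (B : ι → Set Ω) (hmB : ∀ i, MeasurableSet (B i))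
    (G : SimpleGraph ι) [DecidableRel G.Adj]
    (hlop : ∀ i ∈ 𝓑, ∀ S : Finset ι,
      (∀ j ∈ S, j ∈ 𝓑 ∧ ¬ G.Adj i j ∧ j ≠ i) →
      0 < P (⋂ j ∈ S, (B j)ᶜ) →
      ProbabilityTheory.cond P (⋂ j ∈ S, (B j)ᶜ) (B i) ≤ P (B i))
    (x : ι → ℝ) (hx0 : ∀ i ∈ 𝓑, 0 < x i) (hx1 : ∀ i ∈ 𝓑, x i < 1)
    (hcond : ∀ i ∈ 𝓑, P (B i) ≤
      ENNReal.ofReal (x i * ∏ j ∈ 𝓑.filter (fun j => G.Adj i j), (1 - x j)))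
    (A : Set Ω) (hA : MeasurableSet A) (T : Finset ι) (hT : T ⊆ 𝓑)
    (hAlop : ∀ S : Finset ι, (∀ j ∈ S, j ∈ 𝓑 ∧ j ∉ T) →
      0 < P (⋂ j ∈ S, (B j)ᶜ) →
      ProbabilityTheory.cond P (⋂ j ∈ S, (B j)ᶜ) A ≤ P A) :
    ProbabilityTheory.cond P (⋂ i ∈ 𝓑, (B i)ᶜ) A ≤
      P A * ENNReal.ofReal (∏ i ∈ T, (1 - x i)⁻¹) := by
  classical
  have hmI : ∀ S : Finset ι, MeasurableSet (⋂ j ∈ S, (B j)ᶜ) :=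
    fun S => S.measurableSet_biInter (fun j _ => (hmB j).compl)
  have main := lll_main P 𝓑 B hmB G hlop x hx0 hx1 hcond
  have final : ∀ U : Finset ι, U ⊆ T →
      P[A | ⋂ j ∈ (𝓑 \ T) ∪ U, (B j)ᶜ] ≤ P A * ENNReal.ofReal (∏ i ∈ U, (1 - x i)⁻¹) := by
    intro U
    induction U using Finset.induction_on with
    | empty =>
      intro _
      rw [Finset.union_empty, Finset.prod_empty, ENNReal.ofReal_one, mul_one]
      refine hAlop (𝓑 \ T) (fun j hj => ?_) ((main (𝓑 \ T).card (𝓑 \ T) (Finset.sdiff_subset) le_rfl).1)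
      rw [Finset.mem_sdiff] at hj
      exact hj
    | @insert t U htU ihf =>
      intro hsub
      have htT : t ∈ T := hsub (Finset.mem_insert_self _ _)
      have ht𝓑 : t ∈ 𝓑 := hT htT
      have hUsub : U ⊆ T := (Finset.subset_insert _ _).trans hsub
      set W := 𝓑 \ T ∪ U with hWdef
      have htW : t ∉ W := by
        rw [hWdef, Finset.mem_union, Finset.mem_sdiff]
        push_neg
        exact ⟨fun _ => htT, htU⟩
      have hWsub : W ⊆ 𝓑 := Finset.union_subset Finset.sdiff_subset (hUsub.trans hT)
      obtain ⟨hposW, hKW⟩ := main W.card W hWsub le_rfl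
      have hcompl : ENNReal.ofReal (1 - x t) ≤ P[(B t)ᶜ | ⋂ j ∈ W, (B j)ᶜ] :=
        lll_compl P (hmB t) hposW.ne' (hx0 t ht𝓑).le (hKW t ht𝓑 htW)
      have hWins : (𝓑 \ T) ∪ insert t U = insert t W := by rw [Finset.union_insert]
      rw [hWins]
      have hIins : (⋂ j ∈ insert t W, (B j)ᶜ) = (⋂ j ∈ W, (B j)ᶜ) ∩ (B t)ᶜ := by
        rw [Finset.set_biInter_insert, Set.inter_comm]
      have hmulW : P (⋂ j ∈ W, (B j)ᶜ) * P[(B t)ᶜ | ⋂ j ∈ W, (B j)ᶜ]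
          = P ((⋂ j ∈ W, (B j)ᶜ) ∩ (B t)ᶜ) := by
        rw [cond_apply (hmI W), ← mul_assoc,
          ENNReal.mul_inv_cancel hposW.ne' (measure_ne_top _ _), one_mul]
      have hlb : P (⋂ j ∈ W, (B j)ᶜ) * ENNReal.ofReal (1 - x t)
          ≤ P (⋂ j ∈ insert t W, (B j)ᶜ) := by
        rw [hIins, ← hmulW]
        exact mul_le_mul_right hcompl _
      have h1x0 : (0:ℝ) < 1 - x t := by have := hx1 t ht𝓑; linarith
      rw [cond_apply (hmI (insert t W))]
      calc (P (⋂ j ∈ insert t W, (B j)ᶜ))⁻¹ * P ((⋂ j ∈ insert t W, (B j)ᶜ) ∩ A)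
          ≤ (P (⋂ j ∈ W, (B j)ᶜ) * ENNReal.ofReal (1 - x t))⁻¹
            * P ((⋂ j ∈ W, (B j)ᶜ) ∩ A) := by
            refine mul_le_mul' (ENNReal.inv_le_inv' hlb) (measure_mono ?_)
            rw [hIins]
            exact Set.inter_subset_inter_left A Set.inter_subset_left
        _ = ENNReal.ofReal ((1 - x t)⁻¹)
            * ((P (⋂ j ∈ W, (B j)ᶜ))⁻¹ * P ((⋂ j ∈ W, (B j)ᶜ) ∩ A)) := by
            rw [ENNReal.mul_inv (Or.inr ENNReal.ofReal_ne_top) (Or.inl (measure_ne_top _ _)),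
              ← ENNReal.ofReal_inv_of_pos h1x0]
            ring
        _ = ENNReal.ofReal ((1 - x t)⁻¹) * P[A | ⋂ j ∈ W, (B j)ᶜ] := by
            rw [cond_apply (hmI W)]
        _ ≤ ENNReal.ofReal ((1 - x t)⁻¹)
            * (P A * ENNReal.ofReal (∏ i ∈ U, (1 - x i)⁻¹)) :=
            mul_le_mul_right (ihf hUsub) _
        _ = P A * ENNReal.ofReal (∏ i ∈ insert t U, (1 - x i)⁻¹) := by
            rw [Finset.prod_insert htU, ENNReal.ofReal_mul (by positivity)]
            ring
  have hfin := final T le_rfl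
  rwa [Finset.sdiff_union_of_subset hT] at hfin
end

section
/- Let G be a finite simple graph with maximum degree at most Δ (Δ ≥ 1), let v be a vertex of G, and let ℓ ≥ 2 be a natural number. Then the number of vertex subsets S of size ℓ containing v whose induced subgraph G[S] is connected is at most (e·Δ²)^(ℓ−1)/2. -/
/-!
A connected set `S ∋ v` of size `ℓ` is the vertex set of a closed walk at `v` of length
`2 (ℓ - 1)`: grow the walk one vertex at a time, splicing a detour `u → w → u` along an edge
leaving the vertices visited so far. So these sets are at most as many as such walks, of which
there are at most `Δ ^ (2 (ℓ - 1))`; finally `Δ ^ (2 (ℓ - 1)) ≤ (e Δ²)^(ℓ - 1) / 2` since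
`e ^ (ℓ - 1) ≥ e > 2`.
-/

open Finset

namespace SimpleGraph

variable {V : Type*} {G : SimpleGraph V}

theorem card_finsetWalkLength_le_pow [DecidableEq V] [G.LocallyFinite] {Δ : ℕ}
    (hdeg : ∀ w, G.degree w ≤ Δ) (n : ℕ) (u v : V) :
    #(G.finsetWalkLength n u v) ≤ Δ ^ n := by
  induction n generalizing u with
  | zero =>
    unfold finsetWalkLength
    split
    · subst_vars
      simp
    · simp
  | succ n ih =>
    calc #(G.finsetWalkLength (n + 1) u v)
        ≤ ∑ w : G.neighborSet u, #(G.finsetWalkLength n w v) := by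
          rw [finsetWalkLength]
          refine card_biUnion_le.trans (sum_le_sum fun w _ => ?_)
          rw [card_map]
      _ ≤ ∑ _w : G.neighborSet u, Δ ^ n := sum_le_sum fun w _ => ih w
      _ = G.degree u * Δ ^ n := by
          rw [sum_const, card_univ, card_neighborSet_eq_degree, smul_eq_mul]
      _ ≤ Δ ^ (n + 1) := by
          rw [pow_succ']
          exact Nat.mul_le_mul_right _ (hdeg u)

theorem Walk.exists_length_eq_add_two_support_toFinset_eq_insert [DecidableEq V] {a b u w : V}
    (p : G.Walk a b) (hu : u ∈ p.support) (huw : G.Adj u w) :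
    ∃ q : G.Walk a b, q.length = p.length + 2 ∧
      q.support.toFinset = insert w p.support.toFinset := by
  obtain ⟨p₁, p₂, rfl⟩ := Walk.mem_support_iff_exists_append.mp hu
  refine ⟨p₁.append ((Walk.cons huw (Walk.cons huw.symm Walk.nil)).append p₂), ?_, ?_⟩
  · simp only [Walk.length_append, Walk.length_cons, Walk.length_nil]
    omega
  · have hu₁ := p₁.end_mem_support
    ext x
    simp only [List.mem_toFinset, Walk.mem_support_append_iff, Walk.support_cons,
      Walk.support_nil, List.mem_cons, List.not_mem_nil, mem_insert]
    grind

theorem Connected.exists_walk_support_toFinset_eq_univ [Fintype V] [DecidableEq V]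
    (hG : G.Connected) (v : V) :
    ∃ p : G.Walk v v, p.length = 2 * (Fintype.card V - 1) ∧ p.support.toFinset = univ := by
  have : Nonempty V := hG.nonempty
  have grow : ∀ k < Fintype.card V,
      ∃ p : G.Walk v v, p.length = 2 * k ∧ #p.support.toFinset = k + 1 := by
    intro k hk
    induction k with
    | zero => exact ⟨Walk.nil, rfl, by simp⟩
    | succ k ih =>
      obtain ⟨p, hlen, hcard⟩ := ih (by omega)
      obtain ⟨x, -, hx⟩ := exists_mem_notMem_of_card_lt_card (s := p.support.toFinset)
        (t := univ) (by rw [card_univ]; omega)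
      obtain ⟨d, -, hd₁, hd₂⟩ := (hG v x).some.exists_boundary_dart {y | y ∈ p.support}
        p.start_mem_support (by simp at hx; exact hx)
      obtain ⟨q, hqlen, hqsupp⟩ :=
        p.exists_length_eq_add_two_support_toFinset_eq_insert hd₁ d.adj
      refine ⟨q, by omega, ?_⟩
      rw [hqsupp, card_insert_of_notMem (by simpa using hd₂), hcard]
  have hpos := Fintype.card_pos (α := V)
  obtain ⟨p, hlen, hcard⟩ := grow (Fintype.card V - 1) (by omega)
  exact ⟨p, hlen, eq_univ_of_card _ (by omega)⟩

theorem exists_walk_support_toFinset_eq_of_connected_induce [DecidableEq V] {S : Finset V}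
    {v : V} (hv : v ∈ S) (hS : (G.induce (S : Set V)).Connected) :
    ∃ p : G.Walk v v, p.length = 2 * (#S - 1) ∧ p.support.toFinset = S := by
  obtain ⟨p, hlen, hsupp⟩ := hS.exists_walk_support_toFinset_eq_univ ⟨v, hv⟩
  have hall (a : S) : a ∈ p.support := List.mem_toFinset.mp (hsupp ▸ mem_univ a)
  have hmap := congrArg List.toFinset (p.support_map (Embedding.induce (S : Set V)).toHom)
  exact ⟨p.map (Embedding.induce (S : Set V)).toHom,
    (p.length_map _).trans (by simpa using hlen),
    hmap.trans (by ext; simp [hall])⟩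

theorem card_connected_induce_mem_le_pow [DecidableEq V] [G.LocallyFinite] {Δ : ℕ}
    (hdeg : ∀ w, G.degree w ≤ Δ) (v : V) (ℓ : ℕ) :
    Nat.card {S : Finset V | #S = ℓ ∧ v ∈ S ∧ (G.induce (S : Set V)).Connected} ≤
      Δ ^ (2 * (ℓ - 1)) := by
  have hsub : {S : Finset V | #S = ℓ ∧ v ∈ S ∧ (G.induce (S : Set V)).Connected} ⊆
      ((G.finsetWalkLength (2 * (ℓ - 1)) v v).image fun p => p.support.toFinset :) := by
    rintro S ⟨rfl, hv, hS⟩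
    obtain ⟨p, hlen, hsupp⟩ := exists_walk_support_toFinset_eq_of_connected_induce hv hS
    exact mem_image.mpr ⟨p, mem_finsetWalkLength_iff.mpr hlen, hsupp⟩
  calc _ ≤ Nat.card ((G.finsetWalkLength (2 * (ℓ - 1)) v v).image
          fun p => p.support.toFinset :) := Nat.card_mono (finite_toSet _) hsub
    _ ≤ #(G.finsetWalkLength (2 * (ℓ - 1)) v v) := by
      rw [Nat.card_eq_finsetCard]
      exact card_image_le
    _ ≤ Δ ^ (2 * (ℓ - 1)) := card_finsetWalkLength_le_pow hdeg _ v v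

end SimpleGraph

theorem stmt_16_general {V : Type*} [Fintype V] [DecidableEq V] (G : SimpleGraph V)
    [DecidableRel G.Adj] (Δ : ℕ) (hdeg : ∀ w : V, G.degree w ≤ Δ)
    (v : V) (ℓ : ℕ) (hℓ : 2 ≤ ℓ) :
    (Nat.card {S : Finset V | S.card = ℓ ∧ v ∈ S ∧ (G.induce (↑S : Set V)).Connected} : ℝ) ≤
      (Real.exp 1 * (Δ : ℝ) ^ 2) ^ (ℓ - 1) / 2 := by
  have hexp : 2 ≤ Real.exp 1 ^ (ℓ - 1) :=
    Real.exp_one_gt_two.le.trans (le_self_pow₀ (Real.one_le_exp zero_le_one) (by omega))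
  calc _ ≤ ((Δ ^ (2 * (ℓ - 1)) : ℕ) : ℝ) := by
        exact_mod_cast G.card_connected_induce_mem_le_pow hdeg v ℓ
    _ ≤ Real.exp 1 ^ (ℓ - 1) * (Δ : ℝ) ^ (2 * (ℓ - 1)) / 2 := by
        rw [le_div_iff₀ two_pos]
        push_cast
        nlinarith [pow_nonneg (Nat.cast_nonneg Δ : (0 : ℝ) ≤ Δ) (2 * (ℓ - 1))]
    _ = (Real.exp 1 * (Δ : ℝ) ^ 2) ^ (ℓ - 1) / 2 := by
        rw [mul_pow, ← pow_mul]

theorem stmt_16 {V : Type*} [Fintype V] [DecidableEq V] (G : SimpleGraph V)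
    [DecidableRel G.Adj] (Δ : ℕ) (hΔ : 1 ≤ Δ) (hdeg : ∀ w : V, G.degree w ≤ Δ)
    (v : V) (ℓ : ℕ) (hℓ : 2 ≤ ℓ) :
    (Nat.card {S : Finset V | S.card = ℓ ∧ v ∈ S ∧ (G.induce (↑S : Set V)).Connected} : ℝ) ≤
      (Real.exp 1 * (Δ : ℝ) ^ 2) ^ (ℓ - 1) / 2 :=
  stmt_16_general G Δ hdeg v ℓ hℓ
end
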